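/- Let f ∈ C[0,1] with p = P_{𝒫ₙ}(f), and let μ ∈ C*[0,1] with ⟨μ, f⟩ ≠ 0. If γ ∈ 𝒫ₙ^⊥ (i.e., ⟨γ, q⟩ = 0 for every q ∈ 𝒫ₙ), then μ ∉ D̂*P_{𝒫ₙ}(f)(γ). Consequently, if μ itself lies in 𝒫ₙ^⊥ and ⟨μ, f⟩ ≠ 0, then μ is not a fixed point of the coderivative operator D̂*P_{𝒫ₙ}(f). -/

import Mathlib

/-- The subspace `𝒫ₙ ⊆ C[0,1]` of (restrictions of) real polynomials of degree `≤ n`. -/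
def Pn (n : ℕ) : Set C(Set.Icc (0 : ℝ) 1, ℝ) :=
  {g | ∃ p : Polynomial ℝ, p.natDegree ≤ n ∧ ∀ t : Set.Icc (0 : ℝ) 1, g t = p.eval (t : ℝ)}

/-- `inCoderiv P f μ φ` says that `φ` belongs to the Fréchet (regular Mordukhovich)
coderivative `D̂*P(f)(μ)` of the single-valued map `P` at `f`:
`limsup_{g→f, g≠f} (⟨φ, g−f⟩ − ⟨μ, P(g)−P(f)⟩)/(‖g−f‖+‖P(g)−P(f)‖) ≤ 0`. -/
def inCoderiv (P : C(Set.Icc (0 : ℝ) 1, ℝ) → C(Set.Icc (0 : ℝ) 1, ℝ))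
    (f : C(Set.Icc (0 : ℝ) 1, ℝ))
    (μ φ : StrongDual ℝ C(Set.Icc (0 : ℝ) 1, ℝ)) : Prop :=
  Filter.limsup
    (fun g => (φ (g - f) - μ (P g - P f)) / (‖g - f‖ + ‖P g - P f‖))
    (nhdsWithin f {f}ᶜ) ≤ 0


/-!
Along the ray `c ↦ c • f` the projection is positively homogeneous, `P (c • f) = c • P f`, so for
`γ ∈ 𝒫ₙ^⊥` the `γ`-term of the Fréchet quotient vanishes on the ray, while the `μ`-term equals
`(c - 1) μ f / (|c - 1| (‖f‖ + ‖P f‖))`. Approaching `f` from the side where `c - 1` has the sign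
of `μ f` makes the quotient equal to `|μ f| / (‖f‖ + ‖P f‖) > 0`, so its limsup is positive.

Homogeneity comes from uniqueness of best uniform polynomial approximation (Haar). If `p₁ ≠ p₂`
are best approximations, so is their midpoint `p`, and at every extremal point of `f - p` the two
agree; hence the extremal set lies in the at most `n` roots of `p₁ - p₂`. Interpolating `f - p`
there by a polynomial `r` of degree `≤ n`, `p + ε • r` is a strictly better approximation.
-/

open Filter Topology Polynomial

section BestApprox

variable {E : Type*} [NormedAddCommGroup E]

def IsBestApprox (S : Set E) (f p : E) : Prop :=
  p ∈ S ∧ ∀ r ∈ S, ‖f - p‖ ≤ ‖f - r‖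

theorem IsBestApprox.norm_sub_eq {S : Set E} {f p₁ p₂ : E} (h₁ : IsBestApprox S f p₁)
    (h₂ : IsBestApprox S f p₂) : ‖f - p₁‖ = ‖f - p₂‖ :=
  le_antisymm (h₁.2 _ h₂.1) (h₂.2 _ h₁.1)

variable [NormedSpace ℝ E] {S : Submodule ℝ E} {f p p₁ p₂ : E}

theorem IsBestApprox.smul (h : IsBestApprox S f p) {c : ℝ} (hc : c ≠ 0) :
    IsBestApprox S (c • f) (c • p) := by
  refine ⟨S.smul_mem c h.1, fun r hr => ?_⟩
  calc ‖c • f - c • p‖ = ‖c‖ * ‖f - p‖ := by rw [← smul_sub, norm_smul]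
    _ ≤ ‖c‖ * ‖f - c⁻¹ • r‖ := by gcongr; exact h.2 _ (S.smul_mem _ hr)
    _ = ‖c • f - r‖ := by rw [← norm_smul, smul_sub, smul_inv_smul₀ hc]

theorem IsBestApprox.midpoint (h₁ : IsBestApprox S f p₁) (h₂ : IsBestApprox S f p₂) :
    IsBestApprox S f ((2 : ℝ)⁻¹ • (p₁ + p₂)) := by
  refine ⟨S.smul_mem _ (S.add_mem h₁.1 h₂.1), fun r hr => le_trans ?_ (h₁.2 r hr)⟩
  calc ‖f - (2 : ℝ)⁻¹ • (p₁ + p₂)‖ = ‖(2 : ℝ)⁻¹ • ((f - p₁) + (f - p₂))‖ := by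
        congr 1; module
    _ ≤ 2⁻¹ * (‖f - p₁‖ + ‖f - p₂‖) := by
        rw [norm_smul, Real.norm_of_nonneg (by norm_num)]; gcongr; exact norm_add_le _ _
    _ = ‖f - p₁‖ := by rw [h₁.norm_sub_eq h₂]; ring

end BestApprox

theorem eq_of_abs_le_of_abs_midpoint_eq {x y d : ℝ} (hx : |x| ≤ d) (hy : |y| ≤ d)
    (h : |2⁻¹ * (x + y)| = d) : x = y := by
  rcases abs_cases x with ⟨_, _⟩ | ⟨_, _⟩ <;> rcases abs_cases y with ⟨_, _⟩ | ⟨_, _⟩ <;>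
    rcases abs_cases (2⁻¹ * (x + y)) with ⟨_, _⟩ | ⟨_, _⟩ <;> linarith

theorem IsCompact.exists_lt_forall_le {X : Type*} [TopologicalSpace X] {K : Set X}
    (hK : IsCompact K) {g : X → ℝ} (hg : ContinuousOn g K) {d : ℝ} (h : ∀ x ∈ K, g x < d) :
    ∃ d' < d, ∀ x ∈ K, g x ≤ d' := by
  rcases K.eq_empty_or_nonempty with rfl | hne
  · exact ⟨d - 1, by linarith, by simp⟩
  · obtain ⟨x₀, hx₀, hmax⟩ := hK.exists_isMaxOn hne hg
    exact ⟨g x₀, h x₀ hx₀, fun x hx => hmax hx⟩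

/-- Near the extremal points `|h - r| < ‖h‖`, so `h - ε • r = (1 - ε) • h + ε • (h - r)` is small
there; away from them `|h|` stays below `‖h‖` by compactness. -/
theorem ContinuousMap.exists_norm_sub_smul_lt {X : Type*} [TopologicalSpace X] [CompactSpace X]
    {h r : C(X, ℝ)} (hh : h ≠ 0) (hr : ∀ x, |h x| = ‖h‖ → r x = h x) :
    ∃ ε : ℝ, 0 < ε ∧ ‖h - ε • r‖ < ‖h‖ := by
  set d := ‖h‖
  have hd : 0 < d := norm_pos_iff.2 hh
  set U := {x | |h x - r x| < d}
  have hU : IsCompact Uᶜ := (isOpen_lt (by fun_prop) continuous_const).isClosed_compl.isCompact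
  obtain ⟨d', hd'd, hd'⟩ : ∃ d' < d, ∀ x ∈ Uᶜ, |h x| ≤ d' := by
    refine hU.exists_lt_forall_le (by fun_prop : Continuous fun x => |h x|).continuousOn
      fun x hx => (h.norm_coe_le_norm x).lt_of_ne fun hx' => hx ?_
    simp [U, hr x hx', hd]
  set ε := min 1 ((d - d') / (‖r‖ + 1))
  have hε : 0 < ε := lt_min one_pos (div_pos (by linarith) (by positivity))
  have hεr : ε * ‖r‖ < d - d' := by
    have := norm_nonneg r
    calc ε * ‖r‖ < ε * (‖r‖ + 1) := by nlinarith
      _ ≤ d - d' := (le_div_iff₀ (by linarith)).1 (min_le_right _ _)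
  refine ⟨ε, hε, (ContinuousMap.norm_lt_iff _ hd).2 fun x => ?_⟩
  have hhx : |h x| ≤ d := h.norm_coe_le_norm x
  have hrx : |r x| ≤ ‖r‖ := r.norm_coe_le_norm x
  simp only [ContinuousMap.sub_apply, ContinuousMap.smul_apply, Real.norm_eq_abs]
  by_cases hx : x ∈ U
  · have hε1 : ε ≤ 1 := min_le_left _ _
    calc |h x - ε * r x| = |(1 - ε) * h x + ε * (h x - r x)| := by ring_nf
      _ ≤ (1 - ε) * |h x| + ε * |h x - r x| := by
        refine (abs_add_le _ _).trans ?_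
        rw [abs_mul, abs_mul, abs_of_nonneg (by linarith : 0 ≤ 1 - ε), abs_of_pos hε]
      _ < (1 - ε) * d + ε * d := by
        have : |h x - r x| < d := hx
        nlinarith
      _ = d := by ring
  · calc |h x - ε * r x| ≤ |h x| + ε * |r x| := by
          refine (abs_sub _ _).trans ?_; rw [abs_mul, abs_of_pos hε]
      _ ≤ d' + ε * ‖r‖ := by gcongr; exact hd' x hx
      _ < d := by linarith

namespace Pn

def submodule (n : ℕ) : Submodule ℝ C(Set.Icc (0 : ℝ) 1, ℝ) where
  carrier := Pn n
  add_mem' := by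
    rintro _ _ ⟨p, hp, hpe⟩ ⟨q, hq, hqe⟩
    exact ⟨p + q, (natDegree_add_le _ _).trans (max_le hp hq), fun t => by simp [hpe, hqe]⟩
  zero_mem' := ⟨0, by simp, fun t => by simp⟩
  smul_mem' := by
    rintro c _ ⟨p, hp, hpe⟩
    exact ⟨C c * p, (natDegree_C_mul_le c p).trans hp, fun t => by simp [hpe]⟩

theorem exists_eq_on_finset {n : ℕ} (Z : Finset ℝ) (hZ : Z.card ≤ n)
    (h : C(Set.Icc (0 : ℝ) 1, ℝ)) :
    ∃ r ∈ Pn n, ∀ t : Set.Icc (0 : ℝ) 1, (t : ℝ) ∈ Z → r t = h t := by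
  set w := Set.IccExtend zero_le_one h
  set q := Lagrange.interpolate Z id w
  have hq : q.natDegree ≤ n := natDegree_le_iff_degree_le.2 <|
    (Lagrange.degree_interpolate_lt w (Set.injOn_id _)).le.trans (by exact_mod_cast hZ)
  refine ⟨q.toContinuousMapOn _, ⟨q, hq, fun t => rfl⟩, fun t ht => ?_⟩
  exact (Lagrange.eval_interpolate_at_node w (Set.injOn_id _) ht).trans (Set.IccExtend_val _ h t)

theorem exists_finset_of_ne {n : ℕ} {p₁ p₂ : C(Set.Icc (0 : ℝ) 1, ℝ)} (h₁ : p₁ ∈ Pn n)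
    (h₂ : p₂ ∈ Pn n) (hne : p₁ ≠ p₂) :
    ∃ Z : Finset ℝ, Z.card ≤ n ∧ ∀ t, p₁ t = p₂ t → (t : ℝ) ∈ Z := by
  obtain ⟨q₁, hq₁, he₁⟩ := h₁
  obtain ⟨q₂, hq₂, he₂⟩ := h₂
  have hq : q₁ - q₂ ≠ 0 := fun h0 => hne <| ContinuousMap.ext fun t => by
    rw [he₁, he₂, sub_eq_zero.1 h0]
  refine ⟨(q₁ - q₂).roots.toFinset, ?_, fun t ht => ?_⟩
  · exact (Multiset.toFinset_card_le _).trans <| (card_roots' _).trans <|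
      (natDegree_sub_le _ _).trans (max_le hq₁ hq₂)
  · rw [Multiset.mem_toFinset, mem_roots hq, IsRoot, eval_sub, ← he₁, ← he₂, ht, sub_self]

theorem isBestApprox_unique {n : ℕ} {f p₁ p₂ : C(Set.Icc (0 : ℝ) 1, ℝ)}
    (h₁ : IsBestApprox (Pn n) f p₁) (h₂ : IsBestApprox (Pn n) f p₂) : p₁ = p₂ := by
  by_contra hne
  have hp := IsBestApprox.midpoint (S := submodule n) h₁ h₂
  set p := (2 : ℝ)⁻¹ • (p₁ + p₂)
  have hn₁ : ‖f - p₁‖ = ‖f - p‖ := h₁.norm_sub_eq hp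
  have hn₂ : ‖f - p₂‖ = ‖f - p‖ := h₂.norm_sub_eq hp
  have hfp : f - p ≠ 0 := by
    intro h0
    rw [h0, norm_zero, norm_eq_zero, sub_eq_zero] at hn₁ hn₂
    exact hne (hn₁.symm.trans hn₂)
  obtain ⟨Z, hZ, hcoinc⟩ := exists_finset_of_ne h₁.1 h₂.1 hne
  obtain ⟨r, hr, hrZ⟩ := exists_eq_on_finset Z hZ (f - p)
  obtain ⟨ε, -, hε⟩ := (f - p).exists_norm_sub_smul_lt hfp fun t ht => by
    refine hrZ t (hcoinc t ?_)
    have hle₁ := hn₁ ▸ (f - p₁).norm_coe_le_norm t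
    have hle₂ := hn₂ ▸ (f - p₂).norm_coe_le_norm t
    have hmid : (f - p) t = 2⁻¹ * ((f - p₁) t + (f - p₂) t) := by
      simp only [p, ContinuousMap.sub_apply, ContinuousMap.smul_apply, ContinuousMap.add_apply,
        smul_eq_mul]
      ring
    rw [hmid] at ht
    simpa using eq_of_abs_le_of_abs_midpoint_eq hle₁ hle₂ ht
  have hbest := hp.2 (p + ε • r) ((submodule n).add_mem hp.1 ((submodule n).smul_mem ε hr))
  rw [← sub_sub] at hbest
  exact hbest.not_gt hε

end Pn

section FrechetQuotient

variable {E : Type*} [NormedAddCommGroup E] [NormedSpace ℝ E]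

noncomputable def frechetQuotient (P : E → E) (f : E) (μ φ : StrongDual ℝ E) (g : E) : ℝ :=
  (φ (g - f) - μ (P g - P f)) / (‖g - f‖ + ‖P g - P f‖)

theorem isBoundedUnder_le_frechetQuotient (P : E → E) (f : E) (μ φ : StrongDual ℝ E)
    (l : Filter E) : IsBoundedUnder (· ≤ ·) l (frechetQuotient P f μ φ) := by
  refine isBoundedUnder_of ⟨‖φ‖ + ‖μ‖, fun g => ?_⟩
  have ha := norm_nonneg (g - f)
  have hb := norm_nonneg (P g - P f)
  rcases (add_nonneg ha hb).eq_or_lt with h0 | hpos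
  · rw [frechetQuotient, ← h0, div_zero]; positivity
  · rw [frechetQuotient, div_le_iff₀ hpos]
    have h₁ := (le_abs_self _).trans (φ.le_opNorm (g - f))
    have h₂ := (neg_le_abs _).trans (μ.le_opNorm (P g - P f))
    nlinarith [norm_nonneg φ, norm_nonneg μ]

theorem frechetQuotient_smul_self {P : E → E} {f : E} {μ φ : StrongDual ℝ E} {c : ℝ}
    (hPc : P (c • f) = c • P f) (hμ : μ (P f) = 0) :
    frechetQuotient P f μ φ (c • f) = (c - 1) * φ f / (|c - 1| * (‖f‖ + ‖P f‖)) := by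
  have hsub : ∀ x : E, c • x - x = (c - 1) • x := fun x => by rw [sub_smul, one_smul]
  rw [frechetQuotient, hPc, hsub, hsub, map_smul, map_smul, hμ, norm_smul, norm_smul,
    Real.norm_eq_abs, smul_eq_mul, smul_eq_mul, mul_zero, sub_zero, mul_add]

theorem limsup_frechetQuotient_pos {P : E → E} {f : E} {μ φ : StrongDual ℝ E}
    (hP : ∀ c : ℝ, 0 < c → P (c • f) = c • P f) (hμ : μ (P f) = 0) (hφ : φ f ≠ 0) :
    0 < limsup (frechetQuotient P f μ φ) (𝓝[≠] f) := by
  have hf : f ≠ 0 := by rintro rfl; simp at hφ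
  have hcurve : Tendsto (fun t : ℝ => (1 + t * φ f) • f) (𝓝[>] 0) (𝓝[≠] f) := by
    refine tendsto_nhdsWithin_of_tendsto_nhds_of_eventually_within _ ?_ ?_
    · have : Continuous fun t : ℝ => (1 + t * φ f) • f := by fun_prop
      simpa using (this.tendsto 0).mono_left nhdsWithin_le_nhds
    · filter_upwards [self_mem_nhdsWithin] with t (ht : 0 < t) heq
      rw [Set.mem_singleton_iff, add_smul, one_smul, add_eq_left, smul_eq_zero] at heq
      exact heq.elim (mul_ne_zero ht.ne' hφ) hf
  have hpos : ∀ᶠ t in 𝓝[>] (0 : ℝ), 0 < 1 + t * φ f :=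
    nhdsWithin_le_nhds <| (isOpen_lt continuous_const (by fun_prop)).mem_nhds (by simp)
  have hval : ∀ᶠ t in 𝓝[>] (0 : ℝ),
      frechetQuotient P f μ φ ((1 + t * φ f) • f) = |φ f| / (‖f‖ + ‖P f‖) := by
    filter_upwards [hpos, self_mem_nhdsWithin] with t hc (ht : 0 < t)
    rw [frechetQuotient_smul_self (hP _ hc) hμ, add_sub_cancel_left, abs_mul, abs_of_pos ht,
      mul_assoc, ← abs_mul_abs_self (φ f), mul_assoc, mul_div_mul_left _ _ (by positivity),
      mul_div_mul_left _ _ (abs_pos.2 hφ).ne']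
  have hN : 0 < ‖f‖ + ‖P f‖ := by have := norm_pos_iff.2 hf; positivity
  refine (div_pos (abs_pos.2 hφ) hN).trans_le ?_
  exact le_limsup_of_frequently_le (hcurve.frequently (hval.mono fun t ht => ht.ge).frequently)
    (isBoundedUnder_le_frechetQuotient P f μ φ _)

end FrechetQuotient

/-- Let `P` be the metric projection of `C[0,1]` onto `𝒫ₙ` and `μ ∈ C*[0,1]` with
`⟨μ, f⟩ ≠ 0`. Then (i) for every `γ ∈ 𝒫ₙ^⊥` we have `μ ∉ D̂*P(f)(γ)`; and (ii) if
moreover `μ ∈ 𝒫ₙ^⊥`, then `μ` is not a fixed point of `D̂*P(f)`. -/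
theorem stmt_18 (n : ℕ) (P : C(Set.Icc (0 : ℝ) 1, ℝ) → C(Set.Icc (0 : ℝ) 1, ℝ))
    (hP : ∀ g, P g ∈ Pn n ∧ ∀ r ∈ Pn n, ‖g - P g‖ ≤ ‖g - r‖)
    (f : C(Set.Icc (0 : ℝ) 1, ℝ))
    (μ : StrongDual ℝ C(Set.Icc (0 : ℝ) 1, ℝ)) (hμf : μ f ≠ 0) :
    (∀ γ : StrongDual ℝ C(Set.Icc (0 : ℝ) 1, ℝ),
        (∀ q ∈ Pn n, γ q = 0) → ¬ inCoderiv P f γ μ) ∧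
      ((∀ q ∈ Pn n, μ q = 0) → ¬ inCoderiv P f μ μ) := by
  have hhom : ∀ c : ℝ, 0 < c → P (c • f) = c • P f := fun c hc =>
    Pn.isBestApprox_unique (hP (c • f)) (IsBestApprox.smul (S := Pn.submodule n) (hP f) hc.ne')
  have hnot : ∀ γ : StrongDual ℝ C(Set.Icc (0 : ℝ) 1, ℝ),
      (∀ q ∈ Pn n, γ q = 0) → ¬ inCoderiv P f γ μ := fun γ hγ =>
    not_le.2 (limsup_frechetQuotient_pos hhom (hγ _ (hP f).1) hμf)
  exact ⟨hnot, hnot μ⟩
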